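/- Let C be a coalgebra over a field k and M a C-comodule of finite dimension. Then M is projective (respectively injective) in the category of all C-comodules if and only if it is projective (respectively injective) in the category of finite-dimensional C-comodules. -/

import Mathlib

open TensorProduct LinearMap

noncomputable section

universe u

variable (k : Type u) [Field k]
variable (C : Type u) [AddCommGroup C] [Module k C] [Coalgebra k C]

/-- `ρ` is a (counital, coassociative) right comodule coaction. -/
def IsCoact {C : Type*} [AddCommGroup C] [Module k C] [Coalgebra k C]
    {M : Type*} [AddCommGroup M] [Module k M] (ρ : M →ₗ[k] M ⊗[k] C) : Prop :=
  ((TensorProduct.assoc k M C C).toLinearMap ∘ₗ ρ.rTensor C ∘ₗ ρ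
      = (LinearMap.lTensor M (Coalgebra.comul (R := k))) ∘ₗ ρ) ∧
  ((TensorProduct.rid k M).toLinearMap ∘ₗ LinearMap.lTensor M (Coalgebra.counit (R := k)) ∘ₗ ρ
      = LinearMap.id)

/-- `f : M →ₗ N` is a homomorphism of right comodules. -/
def IsComodHom {C : Type*} [AddCommGroup C] [Module k C] [Coalgebra k C]
    {M N : Type*} [AddCommGroup M] [Module k M] [AddCommGroup N] [Module k N]
    (ρM : M →ₗ[k] M ⊗[k] C) (ρN : N →ₗ[k] N ⊗[k] C) (f : M →ₗ[k] N) : Prop :=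
  ρN ∘ₗ f = f.rTensor C ∘ₗ ρM

/-- A submodule `p ⊆ M` is a subcomodule if the coaction maps it into `p ⊗ C`. -/
def IsSubcomod {C : Type*} [AddCommGroup C] [Module k C] [Coalgebra k C]
    {M : Type*} [AddCommGroup M] [Module k M] (ρ : M →ₗ[k] M ⊗[k] C)
    (p : Submodule k M) : Prop :=
  ∀ v ∈ p, ρ v ∈ LinearMap.range ((p.subtype).rTensor C)

/-- `M` is a simple comodule: nonzero, with no nontrivial proper subcomodules. -/
def IsSimpleComod {C : Type*} [AddCommGroup C] [Module k C] [Coalgebra k C]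
    {M : Type*} [AddCommGroup M] [Module k M] (ρ : M →ₗ[k] M ⊗[k] C) : Prop :=
  Nontrivial M ∧ ∀ p : Submodule k M, IsSubcomod k ρ p → p = ⊥ ∨ p = ⊤

variable (M : Type u) [AddCommGroup M] [Module k M]

/-- `M` is an injective object in the category of all right `C`-comodules. -/
def IsInjectiveComod (ρM : M →ₗ[k] M ⊗[k] C) : Prop :=
  ∀ (P N : Type u) [AddCommGroup P] [Module k P] [AddCommGroup N] [Module k N]
    (ρP : P →ₗ[k] P ⊗[k] C) (ρN : N →ₗ[k] N ⊗[k] C), IsCoact k ρP → IsCoact k ρN →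
    ∀ ι : P →ₗ[k] N, IsComodHom k ρP ρN ι → Function.Injective ι →
    ∀ f : P →ₗ[k] M, IsComodHom k ρP ρM f →
    ∃ g : N →ₗ[k] M, IsComodHom k ρN ρM g ∧ g ∘ₗ ι = f

/-- `M` is a projective object in the category of all right `C`-comodules. -/
def IsProjectiveComod (ρM : M →ₗ[k] M ⊗[k] C) : Prop :=
  ∀ (N P : Type u) [AddCommGroup N] [Module k N] [AddCommGroup P] [Module k P]
    (ρN : N →ₗ[k] N ⊗[k] C) (ρP : P →ₗ[k] P ⊗[k] C), IsCoact k ρN → IsCoact k ρP →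
    ∀ π : N →ₗ[k] P, IsComodHom k ρN ρP π → Function.Surjective π →
    ∀ f : M →ₗ[k] P, IsComodHom k ρM ρP f →
    ∃ g : M →ₗ[k] N, IsComodHom k ρM ρN g ∧ π ∘ₗ g = f

/-- `M` is an injective object in the category of finite-dimensional right `C`-comodules. -/
def IsInjectiveComodFD (ρM : M →ₗ[k] M ⊗[k] C) : Prop :=
  ∀ (P N : Type u) [AddCommGroup P] [Module k P] [AddCommGroup N] [Module k N]
    [FiniteDimensional k P] [FiniteDimensional k N]
    (ρP : P →ₗ[k] P ⊗[k] C) (ρN : N →ₗ[k] N ⊗[k] C), IsCoact k ρP → IsCoact k ρN →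
    ∀ ι : P →ₗ[k] N, IsComodHom k ρP ρN ι → Function.Injective ι →
    ∀ f : P →ₗ[k] M, IsComodHom k ρP ρM f →
    ∃ g : N →ₗ[k] M, IsComodHom k ρN ρM g ∧ g ∘ₗ ι = f

/-- `M` is a projective object in the category of finite-dimensional right `C`-comodules. -/
def IsProjectiveComodFD (ρM : M →ₗ[k] M ⊗[k] C) : Prop :=
  ∀ (N P : Type u) [AddCommGroup N] [Module k N] [AddCommGroup P] [Module k P]
    [FiniteDimensional k N] [FiniteDimensional k P]
    (ρN : N →ₗ[k] N ⊗[k] C) (ρP : P →ₗ[k] P ⊗[k] C), IsCoact k ρN → IsCoact k ρP →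
    ∀ π : N →ₗ[k] P, IsComodHom k ρN ρP π → Function.Surjective π →
    ∀ f : M →ₗ[k] P, IsComodHom k ρM ρP f →
    ∃ g : M →ₗ[k] N, IsComodHom k ρM ρN g ∧ π ∘ₗ g = f


section Aux
variable {k : Type u} [Field k]
variable {C : Type u} [AddCommGroup C] [Module k C] [Coalgebra k C]

noncomputable local instance : DecidableEq ↑(Module.Basis.ofVectorSpaceIndex k C) :=
  fun a b => Classical.propDecidable _

noncomputable def auxE (W : Type u) [AddCommGroup W] [Module k W] :
    W ⊗[k] C ≃ₗ[k] (Module.Basis.ofVectorSpaceIndex k C →₀ W) :=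
  (LinearEquiv.lTensor W (Module.Basis.ofVectorSpace k C).repr).trans
    (TensorProduct.finsuppScalarRight k k W (Module.Basis.ofVectorSpaceIndex k C))

variable {W V : Type u} [AddCommGroup W] [Module k W] [AddCommGroup V] [Module k V]

lemma auxE_tmul (w : W) (c : C) (j) :
    auxE W (w ⊗ₜ[k] c) j = (Module.Basis.ofVectorSpace k C).repr c j • w := by
  simp [auxE, TensorProduct.finsuppScalarRight_apply_tmul_apply]

lemma auxE_natural (f : W →ₗ[k] V) (t : W ⊗[k] C) (j) :
    auxE V (f.rTensor C t) j = f (auxE W t j) := by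
  induction t using TensorProduct.induction_on with
  | zero => simp
  | tmul w c => simp [auxE_tmul, rTensor_tmul]
  | add x y hx hy => simp [map_add, Finsupp.add_apply, hx, hy]

lemma auxE_symm_single (j) (w : W) :
    (auxE W).symm (Finsupp.single j w) = w ⊗ₜ[k] (Module.Basis.ofVectorSpace k C) j := by
  apply (auxE W).injective
  rw [LinearEquiv.apply_symm_apply]
  ext i
  rw [auxE_tmul, Module.Basis.repr_self, Finsupp.single_apply, Finsupp.single_apply]
  split_ifs <;> simp

lemma auxE_repr (t : W ⊗[k] C) :
    t = ∑ j ∈ (auxE W t).support, (auxE W t j) ⊗ₜ[k] (Module.Basis.ofVectorSpace k C) j := by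
  conv_lhs => rw [← (auxE W).symm_apply_apply t, ← Finsupp.sum_single (auxE W t)]
  rw [Finsupp.sum, map_sum]
  exact Finset.sum_congr rfl fun j _ => auxE_symm_single j _

lemma auxE_mem_range_iff {p : Submodule k W} (t : W ⊗[k] C) :
    t ∈ LinearMap.range ((p.subtype).rTensor C) ↔ ∀ j, auxE W t j ∈ p := by
  constructor
  · rintro ⟨u, rfl⟩ j
    rw [auxE_natural]
    exact (auxE p u j).2
  · intro h
    refine ⟨(auxE ↥p).symm ⟨(auxE W t).support, fun j => ⟨auxE W t j, h j⟩,
      fun j => by simp [Finsupp.mem_support_iff, Submodule.mk_eq_zero]⟩, ?_⟩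
    apply (auxE W).injective
    ext j
    rw [auxE_natural]
    simp only [LinearEquiv.apply_symm_apply]
    rfl

lemma aux_rTensor_inj (X : Type u) [AddCommGroup X] [Module k X]
    (f : W →ₗ[k] V) (hf : Function.Injective f) : Function.Injective (f.rTensor X) :=
  Module.Flat.rTensor_preserves_injective_linearMap f hf

lemma aux_range_mono {p q : Submodule k W} (hpq : p ≤ q) :
    LinearMap.range ((p.subtype).rTensor C) ≤ LinearMap.range ((q.subtype).rTensor C) := by
  intro t ht
  rw [auxE_mem_range_iff] at ht ⊢
  exact fun j => hpq (ht j)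

lemma isSubcomod_iff (ρ : W →ₗ[k] W ⊗[k] C) (p : Submodule k W) :
    IsSubcomod k ρ p ↔ ∀ v ∈ p, ∀ j, auxE W (ρ v) j ∈ p :=
  forall₂_congr fun v _ => auxE_mem_range_iff (ρ v)

section coactSub

variable (ρ : W →ₗ[k] W ⊗[k] C) (p : Submodule k W) (hp : IsSubcomod k ρ p)

/-- The induced coaction on a subcomodule. -/
noncomputable def coactSub : ↥p →ₗ[k] ↥p ⊗[k] C :=
  ((LinearEquiv.ofInjective ((p.subtype).rTensor C)
      (aux_rTensor_inj C p.subtype p.injective_subtype)).symm.toLinearMap) ∘ₗ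
    ((ρ ∘ₗ p.subtype).codRestrict (LinearMap.range ((p.subtype).rTensor C))
      (fun v => hp v v.2))

lemma coactSub_apply (v : p) : (p.subtype).rTensor C (coactSub ρ p hp v) = ρ v := by
  have h : ∀ z : LinearMap.range ((p.subtype).rTensor C),
      (p.subtype).rTensor C ((LinearEquiv.ofInjective ((p.subtype).rTensor C)
        (aux_rTensor_inj C p.subtype p.injective_subtype)).symm z) = z := by
    intro z
    rw [← LinearEquiv.ofInjective_apply ((p.subtype).rTensor C)
      (h := aux_rTensor_inj C p.subtype p.injective_subtype), LinearEquiv.apply_symm_apply]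
  rw [coactSub, LinearMap.comp_apply, LinearEquiv.coe_coe, h]
  rfl

lemma coactSub_subtype_comodHom : IsComodHom k (coactSub ρ p hp) ρ p.subtype := by
  ext v
  exact ((coactSub_apply ρ p hp v).symm : _)

end coactSub

lemma eq_of_rTensor_subtype {p : Submodule k W} {a b : ↥p ⊗[k] C}
    (h : (p.subtype).rTensor C a = (p.subtype).rTensor C b) : a = b :=
  aux_rTensor_inj C p.subtype p.injective_subtype h

lemma isComodHom_comp {X Y Z : Type u} [AddCommGroup X] [Module k X] [AddCommGroup Y] [Module k Y]
    [AddCommGroup Z] [Module k Z] {ρX : X →ₗ[k] X ⊗[k] C} {ρY : Y →ₗ[k] Y ⊗[k] C}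
    {ρZ : Z →ₗ[k] Z ⊗[k] C} {f : X →ₗ[k] Y} {g : Y →ₗ[k] Z}
    (hf : IsComodHom k ρX ρY f) (hg : IsComodHom k ρY ρZ g) :
    IsComodHom k ρX ρZ (g ∘ₗ f) := by
  unfold IsComodHom at *
  ext x
  have h1 := LinearMap.congr_fun hf x
  have h2 := LinearMap.congr_fun hg (f x)
  simp only [comp_apply] at h1 h2 ⊢
  rw [rTensor_comp, comp_apply, h2, h1]

lemma isComodHom_inclusion {ρ : W →ₗ[k] W ⊗[k] C} {p q : Submodule k W}
    (hp : IsSubcomod k ρ p) (hq : IsSubcomod k ρ q) (hpq : p ≤ q) :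
    IsComodHom k (coactSub ρ p hp) (coactSub ρ q hq) (Submodule.inclusion hpq) := by
  ext v
  apply eq_of_rTensor_subtype (p := q)
  simp only [comp_apply]
  rw [coactSub_apply, ← rTensor_comp_apply, Submodule.subtype_comp_inclusion,
    coactSub_apply]
  rfl

lemma isComodHom_restrict {ρW : W →ₗ[k] W ⊗[k] C} {ρV : V →ₗ[k] V ⊗[k] C}
    {g : W →ₗ[k] V} (hg : IsComodHom k ρW ρV g) {p : Submodule k W} {q : Submodule k V}
    (hp : IsSubcomod k ρW p) (hq : IsSubcomod k ρV q) (h : ∀ x : ↥p, g x ∈ q) :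
    IsComodHom k (coactSub ρW p hp) (coactSub ρV q hq)
      (LinearMap.codRestrict q (g ∘ₗ p.subtype) h) := by
  ext v
  apply eq_of_rTensor_subtype (p := q)
  have hgv := LinearMap.congr_fun hg (p.subtype v)
  simp only [comp_apply] at hgv ⊢
  rw [coactSub_apply, ← rTensor_comp_apply,
    (LinearMap.subtype_comp_codRestrict _ _ _ : q.subtype ∘ₗ codRestrict q (g ∘ₗ p.subtype) h = _),
    rTensor_comp, comp_apply, coactSub_apply]
  exact (by simpa using hgv : _)

lemma isComodHom_codRestrict {ρW : W →ₗ[k] W ⊗[k] C} {ρV : V →ₗ[k] V ⊗[k] C}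
    {g : W →ₗ[k] V} (hg : IsComodHom k ρW ρV g) {q : Submodule k V}
    (hq : IsSubcomod k ρV q) (h : ∀ x : W, g x ∈ q) :
    IsComodHom k ρW (coactSub ρV q hq) (LinearMap.codRestrict q g h) := by
  ext v
  apply eq_of_rTensor_subtype (p := q)
  have hgv := LinearMap.congr_fun hg v
  simp only [comp_apply] at hgv ⊢
  rw [coactSub_apply, ← rTensor_comp_apply, LinearMap.subtype_comp_codRestrict]
  exact (by simpa using hgv : _)

lemma aux_assoc_nat (f : W →ₗ[k] V) :
    (TensorProduct.assoc k V C C).toLinearMap ∘ₗ ((f.rTensor C).rTensor C)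
      = f.rTensor (C ⊗[k] C) ∘ₗ (TensorProduct.assoc k W C C).toLinearMap := by
  apply TensorProduct.ext_threefold
  intro x y z
  rfl

lemma aux_rid_nat (f : W →ₗ[k] V) :
    f ∘ₗ (TensorProduct.rid k W).toLinearMap
      = (TensorProduct.rid k V).toLinearMap ∘ₗ f.rTensor k := by
  apply TensorProduct.ext'
  intro w a
  simp

lemma aux_comm (f : W →ₗ[k] V) {A B : Type u} [AddCommGroup A] [Module k A] [AddCommGroup B]
    [Module k B] (g : A →ₗ[k] B) (t : W ⊗[k] A) :
    f.rTensor B (g.lTensor W t) = g.lTensor V (f.rTensor A t) := by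
  rw [← comp_apply, ← comp_apply, rTensor_comp_lTensor, lTensor_comp_rTensor]

lemma aux_assoc_nat_apply (f : W →ₗ[k] V) (t : (W ⊗[k] C) ⊗[k] C) :
    f.rTensor (C ⊗[k] C) ((TensorProduct.assoc k W C C) t)
      = (TensorProduct.assoc k V C C) (((f.rTensor C).rTensor C) t) := by
  have := LinearMap.congr_fun (aux_assoc_nat f) t
  simpa using this.symm

lemma aux_rid_nat_apply (f : W →ₗ[k] V) (t : W ⊗[k] k) :
    f ((TensorProduct.rid k W) t) = (TensorProduct.rid k V) (f.rTensor k t) := by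
  have := LinearMap.congr_fun (aux_rid_nat f) t
  simpa using this

lemma isCoact_coactSub {ρ : W →ₗ[k] W ⊗[k] C} (hρ : IsCoact k ρ) (p : Submodule k W)
    (hp : IsSubcomod k ρ p) : IsCoact k (coactSub ρ p hp) := by
  obtain ⟨h1, h2⟩ := hρ
  have hsub : ρ ∘ₗ p.subtype = (p.subtype).rTensor C ∘ₗ coactSub ρ p hp :=
    coactSub_subtype_comodHom ρ p hp
  constructor
  · apply LinearMap.ext
    intro v
    apply aux_rTensor_inj (C ⊗[k] C) p.subtype p.injective_subtype
    have e1 := LinearMap.congr_fun h1 (p.subtype v)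
    simp only [comp_apply, LinearEquiv.coe_coe, Submodule.coe_subtype] at e1 ⊢
    rw [aux_comm p.subtype ((Coalgebra.comul (R := k)) : C →ₗ[k] C ⊗[k] C), coactSub_apply,
      aux_assoc_nat_apply, ← rTensor_comp_apply, ← hsub, rTensor_comp_apply, coactSub_apply]
    exact e1
  · apply LinearMap.ext
    intro v
    apply p.injective_subtype
    have e2 := LinearMap.congr_fun h2 (p.subtype v)
    simp only [comp_apply, LinearEquiv.coe_coe, id_coe, id_eq, Submodule.coe_subtype] at e2
    simp only [comp_apply, LinearEquiv.coe_coe, id_coe, id_eq]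
    rw [aux_rid_nat_apply p.subtype, aux_comm p.subtype ((Coalgebra.counit (R := k)) : C →ₗ[k] k),
      coactSub_apply]
    exact e2

lemma isSubcomod_top (ρ : W →ₗ[k] W ⊗[k] C) : IsSubcomod k ρ (⊤ : Submodule k W) := by
  rw [isSubcomod_iff]
  intro v _ j
  trivial

lemma isSubcomod_inf {ρ : W →ₗ[k] W ⊗[k] C} {p q : Submodule k W}
    (hp : IsSubcomod k ρ p) (hq : IsSubcomod k ρ q) : IsSubcomod k ρ (p ⊓ q) := by
  rw [isSubcomod_iff] at hp hq ⊢
  intro v hv j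
  exact ⟨hp v hv.1 j, hq v hv.2 j⟩

lemma isSubcomod_sup {ρ : W →ₗ[k] W ⊗[k] C} {p q : Submodule k W}
    (hp : IsSubcomod k ρ p) (hq : IsSubcomod k ρ q) : IsSubcomod k ρ (p ⊔ q) := by
  rw [isSubcomod_iff] at hp hq ⊢
  intro v hv j
  obtain ⟨a, ha, b, hb, rfl⟩ := Submodule.mem_sup.1 hv
  rw [map_add, map_add, Finsupp.add_apply]
  exact Submodule.add_mem _ (Submodule.mem_sup_left (hp a ha j))
    (Submodule.mem_sup_right (hq b hb j))

lemma isSubcomod_map {ρW : W →ₗ[k] W ⊗[k] C} {ρV : V →ₗ[k] V ⊗[k] C}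
    {g : W →ₗ[k] V} (hg : IsComodHom k ρW ρV g) {p : Submodule k W}
    (hp : IsSubcomod k ρW p) : IsSubcomod k ρV (p.map g) := by
  rw [isSubcomod_iff] at hp ⊢
  rintro v ⟨w, hw, rfl⟩ j
  have hgw := LinearMap.congr_fun hg w
  simp only [comp_apply] at hgw
  rw [hgw, auxE_natural]
  exact Submodule.mem_map_of_mem (hp w hw j)

lemma isSubcomod_sSup_directed {ρ : W →ₗ[k] W ⊗[k] C} {S : Set (Submodule k W)}
    (hne : S.Nonempty) (hdir : DirectedOn (· ≤ ·) S)
    (hS : ∀ p ∈ S, IsSubcomod k ρ p) : IsSubcomod k ρ (sSup S) := by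
  rw [isSubcomod_iff]
  intro v hv j
  obtain ⟨p, hpS, hvp⟩ := (Submodule.mem_sSup_of_directed hne hdir).1 hv
  exact le_sSup hpS ((isSubcomod_iff ρ p).1 (hS p hpS) v hvp j)

lemma aux_lTensor_mem {p : Submodule k W} (g : C →ₗ[k] C) {t : W ⊗[k] C}
    (ht : ∀ j, auxE W t j ∈ p) (j) : auxE W (g.lTensor W t) j ∈ p := by
  obtain ⟨u, rfl⟩ := (auxE_mem_range_iff t).2 ht
  rw [← aux_comm p.subtype g u, auxE_natural]
  exact (auxE ↥p (g.lTensor ↥p u) j).2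

lemma aux_component_coact {ρ : W →ₗ[k] W ⊗[k] C} (hρ : IsCoact k ρ) (x : W)
    (i : Module.Basis.ofVectorSpaceIndex k C) :
    ρ (auxE W (ρ x) i) = LinearMap.lTensor W
      (((TensorProduct.rid k C).toLinearMap ∘ₗ
        LinearMap.lTensor C ((Module.Basis.ofVectorSpace k C).coord i)) ∘ₗ
        ((Coalgebra.comul (R := k)) : C →ₗ[k] C ⊗[k] C)) (ρ x) := by
  set b := Module.Basis.ofVectorSpace k C with hbb
  set χ : C ⊗[k] C →ₗ[k] C :=
    (TensorProduct.rid k C).toLinearMap ∘ₗ LinearMap.lTensor C (b.coord i) with hχ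
  have hL : ∀ (u : W ⊗[k] C) (c : C),
      χ.lTensor W ((TensorProduct.assoc k W C C) (u ⊗ₜ[k] c)) = b.coord i c • u := by
    intro u c
    induction u using TensorProduct.induction_on with
    | zero => simp
    | tmul w c0 =>
        simp [hχ, TensorProduct.assoc_tmul, TensorProduct.rid_tmul, TensorProduct.tmul_smul,
          TensorProduct.smul_tmul']
    | add u1 u2 hu1 hu2 => rw [add_tmul, map_add, map_add, hu1, hu2, smul_add]
  have e1 := LinearMap.congr_fun hρ.1 x
  simp only [comp_apply, LinearEquiv.coe_coe] at e1
  rw [lTensor_comp, comp_apply, ← e1]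
  conv_rhs => rw [auxE_repr (ρ x)]
  simp only [map_sum, rTensor_tmul, hL]
  have hc : ∀ j, b.coord i (b j) = if j = i then (1 : k) else 0 := by
    intro j
    rw [Module.Basis.coord_apply, Module.Basis.repr_self, Finsupp.single_apply]
  simp only [← hbb, hc, ite_smul, one_smul, zero_smul, Finset.sum_ite_eq']
  by_cases hi : i ∈ (auxE W (ρ x)).support
  · rw [if_pos hi]
  · rw [if_neg hi, Finsupp.notMem_support_iff.1 hi, map_zero]

lemma exists_fd_subcomod {ρ : W →ₗ[k] W ⊗[k] C} (hρ : IsCoact k ρ) (x : W) :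
    ∃ p : Submodule k W, IsSubcomod k ρ p ∧ FiniteDimensional k ↥p ∧ x ∈ p := by
  classical
  set V := Submodule.span k (((auxE W (ρ x)).support.image (auxE W (ρ x))) : Set W) with hV
  have hcomp : ∀ j, auxE W (ρ x) j ∈ V := by
    intro j
    by_cases hj : j ∈ (auxE W (ρ x)).support
    · exact Submodule.subset_span (Finset.mem_coe.2 (Finset.mem_image_of_mem _ hj))
    · rw [Finsupp.notMem_support_iff.1 hj]
      exact V.zero_mem
  have hsub : IsSubcomod k ρ V := by
    rw [isSubcomod_iff]
    intro v hv
    refine Submodule.span_induction ?_ ?_ ?_ ?_ hv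
    · rintro w hw j
      obtain ⟨i, _, rfl⟩ := Finset.mem_image.1 hw
      rw [aux_component_coact hρ x i]
      exact aux_lTensor_mem _ hcomp j
    · intro j
      rw [map_zero, map_zero]
      exact V.zero_mem
    · intro a b _ _ ha hb j
      rw [map_add, map_add, Finsupp.add_apply]
      exact V.add_mem (ha j) (hb j)
    · intro r a _ ha j
      rw [map_smul, map_smul, Finsupp.smul_apply]
      exact V.smul_mem r (ha j)
  have hx : x ∈ V := by
    obtain ⟨u, hu⟩ := (auxE_mem_range_iff (ρ x)).2 hcomp
    have e2 := LinearMap.congr_fun hρ.2 x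
    simp only [comp_apply, LinearEquiv.coe_coe, id_coe, id_eq] at e2
    have key : V.subtype ((TensorProduct.rid k ↥V)
        ((((Coalgebra.counit (R := k)) : C →ₗ[k] k)).lTensor ↥V u)) = x := by
      rw [aux_rid_nat_apply V.subtype,
        aux_comm V.subtype ((Coalgebra.counit (R := k)) : C →ₗ[k] k) u, hu]
      exact e2
    rw [← key]
    exact Submodule.coe_mem _
  exact ⟨V, hsub, FiniteDimensional.span_of_finite k (Finset.finite_toSet _), hx⟩

lemma isSubcomod_iSup {ρ : W →ₗ[k] W ⊗[k] C} {ι' : Sort*} {F : ι' → Submodule k W}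
    (hF : ∀ l, IsSubcomod k ρ (F l)) : IsSubcomod k ρ (⨆ l, F l) := by
  rw [isSubcomod_iff]
  intro v hv
  refine Submodule.iSup_induction (motive := fun w => ∀ j, auxE W (ρ w) j ∈ ⨆ l, F l) F hv ?_ ?_ ?_
  · intro l w hw j
    exact le_iSup F l ((isSubcomod_iff ρ (F l)).1 (hF l) w hw j)
  · intro j
    rw [map_zero, map_zero]
    exact Submodule.zero_mem _
  · intro a b ha hb j
    rw [map_add, map_add, Finsupp.add_apply]
    exact Submodule.add_mem _ (ha j) (hb j)

lemma isComodHom_id {ρ : W →ₗ[k] W ⊗[k] C} : IsComodHom k ρ ρ (LinearMap.id) := by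
  unfold IsComodHom
  rw [rTensor_id]
  simp

lemma aux_pmap_piece {ρ : W →ₗ[k] W ⊗[k] C} {ρV : V →ₗ[k] V ⊗[k] C}
    {g G : W →ₗ.[k] V} (hle : g ≤ G)
    (hp : IsSubcomod k ρ g.domain) (hP : IsSubcomod k ρ G.domain)
    (hg : IsComodHom k (coactSub ρ g.domain hp) ρV g.toFun)
    (w : W) (hw : w ∈ g.domain) :
    ρV (G.toFun ⟨w, hle.1 hw⟩)
      = (G.toFun.rTensor C) (coactSub ρ G.domain hP ⟨w, hle.1 hw⟩) := by
  have hincl := LinearMap.congr_fun (isComodHom_inclusion hp hP hle.1) ⟨w, hw⟩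
  simp only [comp_apply] at hincl
  have h1 : G.toFun ⟨w, hle.1 hw⟩ = g.toFun ⟨w, hw⟩ :=
    (hle.2 (x := ⟨w, hw⟩) (y := ⟨w, hle.1 hw⟩) rfl).symm
  have h2 := LinearMap.congr_fun hg ⟨w, hw⟩
  simp only [comp_apply] at h2
  have h3 : (Submodule.inclusion hle.1) (⟨w, hw⟩ : g.domain) = (⟨w, hle.1 hw⟩ : G.domain) :=
    rfl
  have h4 : G.toFun ∘ₗ Submodule.inclusion hle.1 = g.toFun := by
    ext u
    exact (hle.2 (x := u) (y := Submodule.inclusion hle.1 u) rfl).symm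
  rw [h1, h2, ← h4, ← h3, hincl, ← rTensor_comp_apply]

end Aux

/-- A finite-dimensional comodule is projective (resp. injective) in the category of all
`C`-comodules iff it is projective (resp. injective) in the category of finite-dimensional
`C`-comodules. -/
theorem projective_injective_iff_fd [FiniteDimensional k M]
    (ρM : M →ₗ[k] M ⊗[k] C) (hρ : IsCoact k ρM) :
    (IsProjectiveComod k C M ρM ↔ IsProjectiveComodFD k C M ρM) ∧
      (IsInjectiveComod k C M ρM ↔ IsInjectiveComodFD k C M ρM) := by
  constructor
  · constructor
    · intro h N P _ _ _ _ _ _ ρN ρP hN hP π hπ hsurj f hf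
      exact h N P ρN ρP hN hP π hπ hsurj f hf
    · intro hFD N P _ _ _ _ ρN ρP hN hP π hπ hsurj f hf
      classical
      let bm := Module.Basis.ofVectorSpace k M
      have hchoice : ∀ l, ∃ nn : N, π nn = f (bm l) := fun l => hsurj (f (bm l))
      choose n hn using hchoice
      have hFl : ∀ l, ∃ p : Submodule k N, IsSubcomod k ρN p ∧ FiniteDimensional k ↥p ∧ n l ∈ p :=
        fun l => exists_fd_subcomod hN (n l)
      choose F hFsub hFfd hFmem using hFl
      set N' : Submodule k N := ⨆ l, F l with hN'def
      have hN'sub : IsSubcomod k ρN N' := isSubcomod_iSup hFsub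
      haveI : ∀ l, FiniteDimensional k ↥(F l) := hFfd
      haveI hN'fd : FiniteDimensional k ↥N' := Submodule.finiteDimensional_iSup F
      set P' : Submodule k P := N'.map π with hP'def
      have hP'sub : IsSubcomod k ρP P' := isSubcomod_map hπ hN'sub
      haveI hP'fd : FiniteDimensional k ↥P' := inferInstance
      have hfm : ∀ m : M, f m ∈ P' := by
        intro m
        have hm : m ∈ Submodule.span k (Set.range bm) := by rw [Module.Basis.span_eq]; trivial
        refine Submodule.span_induction ?_ ?_ ?_ ?_ hm
        · rintro w ⟨l, rfl⟩
          exact ⟨n l, le_iSup F l (hFmem l), hn l⟩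
        · rw [map_zero]; exact P'.zero_mem
        · intro a b _ _ ha hb; rw [map_add]; exact P'.add_mem ha hb
        · intro r a _ ha; rw [map_smul]; exact P'.smul_mem r ha
      set π' : ↥N' →ₗ[k] ↥P' :=
        LinearMap.codRestrict P' (π ∘ₗ N'.subtype)
          (fun x => Submodule.mem_map_of_mem x.2) with hπ'def
      have hπ'hom : IsComodHom k (coactSub ρN N' hN'sub) (coactSub ρP P' hP'sub) π' :=
        isComodHom_restrict hπ hN'sub hP'sub _
      have hπ'surj : Function.Surjective π' := by
        rintro ⟨y, w, hw, rfl⟩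
        exact ⟨⟨w, hw⟩, Subtype.ext rfl⟩
      set f' : M →ₗ[k] ↥P' := LinearMap.codRestrict P' f hfm with hf'def
      have hf'hom : IsComodHom k ρM (coactSub ρP P' hP'sub) f' :=
        isComodHom_codRestrict hf hP'sub hfm
      obtain ⟨g', hg'hom, hg'eq⟩ := hFD ↥N' ↥P' (coactSub ρN N' hN'sub)
        (coactSub ρP P' hP'sub) (isCoact_coactSub hN N' hN'sub)
        (isCoact_coactSub hP P' hP'sub) π' hπ'hom hπ'surj f' hf'hom
      refine ⟨N'.subtype ∘ₗ g',
        isComodHom_comp hg'hom (coactSub_subtype_comodHom ρN N' hN'sub), ?_⟩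
      ext m
      have h1 := LinearMap.congr_fun hg'eq m
      exact congrArg Subtype.val h1
  · constructor
    · intro h P N _ _ _ _ _ _ ρP ρN hP hN ι hι hinj f hf
      exact h P N ρP ρN hP hN ι hι hinj f hf
    · intro hFD P N _ _ _ _ ρP ρN hP hN ι hι hinj f hf
      classical
      set S : Set (N →ₗ.[k] M) := {g | (∀ (x : P) (hx : ι x ∈ g.domain), g ⟨ι x, hx⟩ = f x) ∧
        ∃ hsub : IsSubcomod k ρN g.domain,
          LinearMap.range ι ≤ g.domain ∧
          IsComodHom k (coactSub ρN g.domain hsub) ρM g.toFun} with hSdef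
      have hrange : IsSubcomod k ρN (LinearMap.range ι) := by
        rw [LinearMap.range_eq_map]
        exact isSubcomod_map hι (isSubcomod_top ρP)
      set e := LinearEquiv.ofInjective ι hinj with hedef
      have hsubcomp : (LinearMap.range ι).subtype ∘ₗ e.toLinearMap = ι := by
        ext x
        exact LinearEquiv.ofInjective_apply ι (h := hinj) x
      have heHom : IsComodHom k ρP (coactSub ρN (LinearMap.range ι) hrange) e.toLinearMap := by
        ext x
        apply eq_of_rTensor_subtype (p := LinearMap.range ι)
        simp only [comp_apply]
        rw [coactSub_apply, ← rTensor_comp_apply, hsubcomp]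
        have h1 := LinearMap.congr_fun hι x
        simp only [comp_apply] at h1
        rw [← h1]
        have h2 := LinearMap.congr_fun hsubcomp x
        simp only [comp_apply] at h2
        exact congrArg ρN h2
      have heInv : IsComodHom k (coactSub ρN (LinearMap.range ι) hrange) ρP
          e.symm.toLinearMap := by
        have hid : e.toLinearMap ∘ₗ e.symm.toLinearMap = LinearMap.id := by
          ext u
          simp
        ext v
        apply aux_rTensor_inj C e.toLinearMap e.injective
        have h1 := LinearMap.congr_fun heHom (e.symm v)
        simp only [comp_apply, LinearEquiv.coe_coe] at h1 ⊢
        rw [← rTensor_comp_apply, hid, rTensor_id, LinearMap.id_apply, ← h1,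
          LinearEquiv.apply_symm_apply]
      set g0 : N →ₗ.[k] M := ⟨LinearMap.range ι, f ∘ₗ e.symm.toLinearMap⟩ with hg0def
      have hg0S : g0 ∈ S := by
        refine ⟨?_, hrange, le_rfl, isComodHom_comp heInv hf⟩
        intro x hx
        show f (e.symm ⟨ι x, hx⟩) = f x
        congr 1
        apply e.injective
        rw [LinearEquiv.apply_symm_apply]
        have h2 := LinearMap.congr_fun hsubcomp x
        simp only [comp_apply] at h2
        exact Subtype.ext h2.symm
      have hchain : ∀ c ⊆ S, IsChain (· ≤ ·) c → ∀ y ∈ c, ∃ ub ∈ S, ∀ z ∈ c, z ≤ ub := by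
        intro c hcS hcchain y hyc
        have hdir : DirectedOn (· ≤ ·) c := hcchain.directedOn
        have hdirim : DirectedOn (· ≤ ·) (LinearPMap.domain '' c) :=
          directedOn_image.2 (hdir.mono @(LinearPMap.domain_mono.monotone))
        obtain ⟨hyagree, hysub, hyle, hyhom⟩ := hcS hyc
        have hsubdom : IsSubcomod k ρN (LinearPMap.sSup c hdir).domain := by
          apply isSubcomod_sSup_directed ⟨_, Set.mem_image_of_mem _ hyc⟩ hdirim
          rintro _ ⟨g, hgc, rfl⟩
          exact (hcS hgc).2.1
        refine ⟨LinearPMap.sSup c hdir, ⟨?_, hsubdom, ?_, ?_⟩,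
          fun z hz => LinearPMap.le_sSup hdir hz⟩
        · intro x hx
          have hxy : ι x ∈ y.domain := hyle (LinearMap.mem_range_self ι x)
          rw [← (LinearPMap.le_sSup hdir hyc).2 (x := ⟨ι x, hxy⟩) (y := ⟨ι x, hx⟩) rfl]
          exact hyagree x hxy
        · exact le_trans hyle (LinearPMap.le_sSup hdir hyc).1
        · apply LinearMap.ext
          rintro ⟨w, hw⟩
          obtain ⟨p, ⟨g, hgc, rfl⟩, hwp⟩ :=
            (Submodule.mem_sSup_of_directed ⟨_, Set.mem_image_of_mem _ hyc⟩ hdirim).1 hw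
          obtain ⟨hgagree, hgsub, hgle, hghom⟩ := hcS hgc
          simp only [comp_apply]
          exact aux_pmap_piece (LinearPMap.le_sSup hdir hgc) hgsub hsubdom hghom w hwp
      obtain ⟨gm, hg0le, hgmmax⟩ := zorn_le_nonempty₀ S hchain g0 hg0S
      obtain ⟨hmagree, hmsub, hmle, hmhom⟩ := hgmmax.1
      have hdomtop : gm.domain = ⊤ := by
        by_contra hne
        obtain ⟨x, hx⟩ : ∃ x : N, x ∉ gm.domain := by
          by_contra hcon
          push_neg at hcon
          exact hne (Submodule.eq_top_iff'.2 hcon)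
        obtain ⟨F, hFsub, hFfd, hxF⟩ := exists_fd_subcomod hN x
        haveI := hFfd
        have hQsub : IsSubcomod k ρN (gm.domain ⊓ F) := isSubcomod_inf hmsub hFsub
        haveI : FiniteDimensional k ↥(gm.domain ⊓ F) :=
          Submodule.finiteDimensional_of_le (inf_le_right : gm.domain ⊓ F ≤ F)
        obtain ⟨h, hhhom, hhcomp⟩ := hFD ↥(gm.domain ⊓ F) ↥F
          (coactSub ρN (gm.domain ⊓ F) hQsub) (coactSub ρN F hFsub)
          (isCoact_coactSub hN (gm.domain ⊓ F) hQsub) (isCoact_coactSub hN F hFsub)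
          (Submodule.inclusion inf_le_right) (isComodHom_inclusion hQsub hFsub inf_le_right)
          (Submodule.inclusion_injective _)
          (gm.toFun ∘ₗ Submodule.inclusion inf_le_left)
          (isComodHom_comp (isComodHom_inclusion hQsub hmsub inf_le_left) hmhom)
        set pF : N →ₗ.[k] M := ⟨F, h⟩ with hpFdef
        have hagree : ∀ (a : gm.domain) (bq : pF.domain), (a : N) = bq → gm a = pF bq := by
          intro a bq hab
          have haQ : (a : N) ∈ gm.domain ⊓ F := ⟨a.2, by rw [hab]; exact bq.2⟩
          have h1 := LinearMap.congr_fun hhcomp ⟨(a : N), haQ⟩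
          simp only [comp_apply] at h1
          have e1 : Submodule.inclusion (inf_le_left : gm.domain ⊓ F ≤ gm.domain)
              ⟨(a : N), haQ⟩ = a := Subtype.ext rfl
          have e2 : Submodule.inclusion (inf_le_right : gm.domain ⊓ F ≤ F)
              ⟨(a : N), haQ⟩ = bq := Subtype.ext hab
          rw [e1, e2] at h1
          exact h1.symm
        set gnew := gm.sup pF hagree with hgnewdef
        have hgmnew : gm ≤ gnew := gm.left_le_sup pF hagree
        have hpFnew : pF ≤ gnew := gm.right_le_sup pF hagree
        have hnewsub : IsSubcomod k ρN gnew.domain := isSubcomod_sup hmsub hFsub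
        have hnewS : gnew ∈ S := by
          refine ⟨?_, hnewsub, le_trans hmle hgmnew.1, ?_⟩
          · intro x' hx'
            have hxm : ι x' ∈ gm.domain := hmle (LinearMap.mem_range_self ι x')
            rw [← hgmnew.2 (x := ⟨ι x', hxm⟩) (y := ⟨ι x', hx'⟩) rfl]
            exact hmagree x' hxm
          · apply LinearMap.ext
            rintro ⟨w, hw⟩
            obtain ⟨a, ha, b, hb, rfl⟩ := Submodule.mem_sup.1 hw
            have hsplit : (⟨a + b, hw⟩ : gnew.domain)
                = ⟨a, hgmnew.1 ha⟩ + ⟨b, hpFnew.1 hb⟩ := Subtype.ext rfl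
            simp only [comp_apply]
            rw [hsplit]
            simp only [map_add]
            rw [aux_pmap_piece hgmnew hmsub hnewsub hmhom a ha,
              aux_pmap_piece hpFnew hFsub hnewsub hhhom b hb]
        have hle' : gnew ≤ gm := hgmmax.2 hnewS hgmnew
        exact hx (hle'.1 (Submodule.mem_sup_right hxF))
      have hmem : ∀ v : N, v ∈ gm.domain := fun v => hdomtop ▸ Submodule.mem_top
      refine ⟨gm.toFun ∘ₗ LinearMap.codRestrict gm.domain LinearMap.id hmem,
        isComodHom_comp (isComodHom_codRestrict isComodHom_id hmsub hmem) hmhom, ?_⟩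
      ext x
      exact hmagree x (hmem (ι x))


end
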